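/- Let u be a sequence with exactly r ≥ 3 distinct letters such that the first two letters of u are equal and the last two letters of u are equal. Write s_r(u) = (a_1 a_2 ⋯ a_r)^t a_1 a_2 ⋯ a_j with t ≥ 1 and 0 ≤ j < r, and define s_r'(u) = (a_1 a_2 ⋯ a_r a_{r+1})^t a_1 a_2 ⋯ a_j on the alphabet {a_1,…,a_{r+1}}, where a_{r+1} is a new letter. Then: (i) s_r'(u) is u-saturated over the alphabet {a_1,…,a_{r+1}}; and (ii) for every i with 1 ≤ i ≤ r+1, both the sequence obtained by prepending a_i to s_r'(u) and the sequence obtained by appending a_i to s_r'(u) contain a copy of u. -/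

import Mathlib

/-- `v` is a *copy* of `u`: it is obtained from `u` by an injective renaming of letters. -/
def IsCopy {α β : Type*} (v : List β) (u : List α) : Prop :=
  ∃ f : α → β, (∀ x ∈ u, ∀ y ∈ u, f x = f y → x = y) ∧ v = u.map f

/-- `s` contains a copy of `u` as a (not necessarily contiguous) subsequence. -/
def ContainsCopy {α β : Type*} (s : List β) (u : List α) : Prop :=
  ∃ v : List β, v.Sublist s ∧ IsCopy v u

/-- `s` is `r`-sparse: any `r` consecutive letters of `s` are pairwise distinct. -/
def Sparse {A : Type*} (r : ℕ) (s : List A) : Prop :=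
  ∀ (i j : ℕ) (hij : i < j) (hj : j < s.length), j < i + r →
    s.get ⟨i, hij.trans hj⟩ ≠ s.get ⟨j, hj⟩

/-- `s` is a `u`-saturated sequence over the alphabet `alphabet`:
`s` uses letters from `alphabet`, is `r`-sparse (where `r` is the number of distinct
letters of `u`), avoids `u`, and inserting any letter of `alphabet` at any position
violates `r`-sparsity or creates a copy of `u`. -/
def Saturated {α A : Type*} [DecidableEq α] (u : List α) (s : List A) (alphabet : Set A) : Prop :=
  Sparse u.toFinset.card s ∧ ¬ ContainsCopy s u ∧ (∀ x ∈ s, x ∈ alphabet) ∧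
  ∀ x ∈ alphabet, ∀ i ≤ s.length,
    ¬ Sparse u.toFinset.card (s.insertIdx i x) ∨ ContainsCopy (s.insertIdx i x) u

/-- The initial segment of length `len` of the periodic sequence
`(base+1)(base+2)⋯(base+r)(base+1)(base+2)⋯` on the `r` letters `base+1,…,base+r`. -/
def periodicSeg (r base len : ℕ) : List ℕ :=
  (List.range len).map (fun i => base + i % r + 1)

/-- `srPrime r t j = (a₁ a₂ ⋯ a_{r+1})^t a₁ a₂ ⋯ a_j`, on the letters `aᵢ = i`. -/
def srPrime (r t j : ℕ) : List ℕ :=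
  periodicSeg (r + 1) 0 ((r + 1) * t) ++ (List.range j).map (· + 1)


/-!
Write `s'` for `s_r'(u)`, the word of period `r + 1`. A copy of `u` in `s'` uses only `r` letters,
so it misses a letter of `s'`; deleting that letter from `s'` leaves (up to renaming) a prefix of
`s_r(u)`, which avoids `u`.

For the insertions, take a copy of `u` in `s_r(u) a_{j+1}`. As `u` starts with a repeated letter,
the copy of its second letter lies at least a period `r` after the first, so the rest of the copy
fits into a segment of `s_r(u)` one period shorter. Stretching that segment (a new letter after every
block of `r`, position `p ↦ p + p / r`) and rotating the alphabet moves it into `s'` after the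
inserted letter, which then plays the first letter of `u`. This covers prepending any letter and
inserting `a_{r+1}` after the first letter; the other end, with the last two letters of `u`, is
symmetric. Any other insertion repeats a letter at distance less than `r`, since any `r + 1`
consecutive positions of `s'` carry all its letters.
-/

section

variable {α β : Type*}

section Positions

theorem containsCopy_map_iff {u : List α} {l : List ℕ} (hl : l.Pairwise (· < ·)) {w : ℕ → β} :
    ContainsCopy (l.map w) u ↔ ∃ φ : Fin u.length → ℕ, StrictMono φ ∧ (∀ i, φ i ∈ l) ∧
      ∀ i k, w (φ i) = w (φ k) ↔ u.get i = u.get k := by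
  constructor
  · rintro ⟨v, hv, f, hf, rfl⟩
    obtain ⟨l', hl', hmap⟩ := List.sublist_map_iff.1 hv
    have hlen : l'.length = u.length := by simpa using (congrArg List.length hmap).symm
    have hw : ∀ i : Fin u.length, w l'[i.1] = f (u.get i) := fun i => by
      simpa using (List.getElem_of_eq hmap (by simp : i.1 < (u.map f).length)).symm
    refine ⟨fun i => l'[i.1],
      fun i k hik => List.pairwise_iff_getElem.1 (hl.sublist hl') _ _ _ _ hik,
      fun i => hl'.subset (List.getElem_mem _), fun i k => ?_⟩
    rw [hw, hw]
    exact ⟨hf _ (List.get_mem _ _) _ (List.get_mem _ _), congrArg f⟩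
  · rintro ⟨φ, hφ, hmem, hpat⟩
    classical
    have hidx : ∀ i : Fin u.length, u.idxOf (u.get i) < u.length :=
      fun i => List.idxOf_lt_length_of_mem (List.get_mem _ _)
    let f : α → β := fun a => if h : u.idxOf a < u.length then w (φ ⟨_, h⟩) else w 0
    have hf : ∀ i, f (u.get i) = w (φ i) := fun i => by
      simp only [f, dif_pos (hidx i)]
      exact (hpat _ _).2 (List.getElem_idxOf (hidx i))
    refine ⟨(List.ofFn φ).map w, ?_, f, ?_, ?_⟩
    · refine (List.sublist_of_subperm_of_pairwise ?_
        (List.pairwise_ofFn.2 fun _ _ h => hφ h) hl).map w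
      exact List.subperm_of_subset (List.nodup_ofFn.2 hφ.injective)
        (fun a ha => by obtain ⟨i, rfl⟩ := List.mem_ofFn.1 ha; exact hmem i)
    · intro a ha b hb hab
      obtain ⟨i, rfl⟩ := List.get_of_mem ha
      obtain ⟨k, rfl⟩ := List.get_of_mem hb
      rw [hf, hf] at hab
      exact (hpat i k).1 hab
    · refine List.ext_get (by simp) fun n _ h => ?_
      simpa using (hf ⟨n, by simpa using h⟩).symm

theorem containsCopy_range_map_iff {u : List α} {n : ℕ} {w : ℕ → β} :
    ContainsCopy ((List.range n).map w) u ↔ ∃ φ : Fin u.length → ℕ, StrictMono φ ∧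
      (∀ i, φ i < n) ∧ ∀ i k, w (φ i) = w (φ k) ↔ u.get i = u.get k := by
  simpa using containsCopy_map_iff (u := u) (w := w) List.pairwise_lt_range

theorem sparse_range_map_iff {r n : ℕ} {w : ℕ → β} :
    Sparse r ((List.range n).map w) ↔ ∀ i k, i < k → k < n → k < i + r → w i ≠ w k := by
  simp [Sparse]

theorem Sparse.mono {r r' : ℕ} {s : List β} (h : Sparse r s) (hr : r' ≤ r) : Sparse r' s :=
  fun i k hik hk _ => h i k hik hk (by omega)

def insertAt (w : ℕ → β) (m : ℕ) (x : β) (k : ℕ) : β :=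
  if k < m then w k else if k = m then x else w (k - 1)

theorem range_map_insertIdx {w : ℕ → β} {m n : ℕ} (hm : m ≤ n) (x : β) :
    ((List.range n).map w).insertIdx m x = (List.range (n + 1)).map (insertAt w m x) := by
  refine List.ext_getElem (by simp [List.length_insertIdx, hm]) fun k _ _ => ?_
  rw [List.getElem_insertIdx]
  simp only [insertAt, List.getElem_map, List.getElem_range]
  split_ifs <;> rfl

theorem not_sparse_range_map_insertAt {w : ℕ → β} {r n m p : ℕ} {x : β} (hm : m ≤ n) (hp : p < n)
    (hwp : w p = x) (hmp : m < p + r) (hpm : p + 1 < m + r) :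
    ¬ Sparse r ((List.range (n + 1)).map (insertAt w m x)) := by
  rw [sparse_range_map_iff]
  intro h
  rcases lt_or_ge p m with hlt | hge
  · exact h p m hlt (by omega) hmp (by simp [insertAt, hlt, hwp])
  · refine h m (p + 1) (by omega) (by omega) hpm ?_
    simp [insertAt, hwp, show ¬ p + 1 < m by omega, show p + 1 ≠ m by omega]

end Positions

section Arithmetic

theorem add_le_of_lt_of_mod_eq {a b r : ℕ} (hab : a < b) (h : a % r = b % r) : a + r ≤ b := by
  have := Nat.le_of_dvd (by omega) ((Nat.modEq_iff_dvd' hab.le).1 h)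
  omega

theorem add_mod_eq_add_mod_iff {a b e n : ℕ} (ha : a < n) (hb : b < n) :
    (a + e) % n = (b + e) % n ↔ a = b := by
  refine ⟨fun h => ?_, fun h => h ▸ rfl⟩
  have : a % n = b % n := Nat.ModEq.add_right_cancel' e h
  rwa [Nat.mod_eq_of_lt ha, Nat.mod_eq_of_lt hb] at this

theorem exists_mod_eq_of_lt {y n : ℕ} (c : ℕ) (hy : y < n) :
    ∃ p, c ≤ p ∧ p < c + n ∧ p % n = y := by
  have h := Nat.div_add_mod (c + n - 1 - y) n
  have := Nat.mod_lt (c + n - 1 - y) (show 0 < n by omega)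
  refine ⟨y + n * ((c + n - 1 - y) / n), by omega, by omega, ?_⟩
  rw [Nat.add_mul_mod_self_left, Nat.mod_eq_of_lt hy]

theorem exists_add_mod_eq {y n : ℕ} (a : ℕ) (hy : y < n) : ∃ e < n, (a + e) % n = y := by
  obtain ⟨p, hap, hpa, hp⟩ := exists_mod_eq_of_lt a hy
  exact ⟨p - a, by omega, by rwa [Nat.add_sub_cancel' hap]⟩

def stretch (r p : ℕ) : ℕ := p + p / r

theorem stretch_strictMono (r : ℕ) : StrictMono (stretch r) := fun p q hpq => by
  have := Nat.div_le_div_right (c := r) hpq.le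
  simp only [stretch]
  omega

theorem stretch_add_mod (r p e : ℕ) : (stretch r p + e) % (r + 1) = (p % r + e) % (r + 1) := by
  have h : stretch r p + e = (p % r + e) + (r + 1) * (p / r) := by
    have := Nat.div_add_mod p r
    simp only [stretch]
    rw [Nat.succ_mul]
    omega
  rw [h, Nat.add_mul_mod_self_left]

theorem stretch_lt {r p a b : ℕ} (hp : p < r * a + b) (hb : b ≤ r) :
    stretch r p < (r + 1) * a + b := by
  have hr : 0 < r := Nat.pos_of_ne_zero fun h => by simp [h] at hp hb; omega
  have hdiv : p / r ≤ a :=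
    Nat.lt_succ_iff.1 ((Nat.div_lt_iff_lt_mul hr).2 (by rw [Nat.succ_mul, mul_comm]; omega))
  have h := Nat.div_add_mod p r
  have := Nat.mod_lt p hr
  simp only [stretch]
  rcases hdiv.lt_or_eq with hlt | heq
  · have := Nat.mul_le_mul_left r hlt
    rw [Nat.mul_succ] at this
    rw [Nat.succ_mul]
    omega
  · rw [heq] at h ⊢
    rw [Nat.succ_mul]
    omega

end Arithmetic

section Periodic

theorem periodicSeg_zero (r n : ℕ) : periodicSeg r 0 n = (List.range n).map (· % r + 1) := by
  simp [periodicSeg]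

theorem srPrime_eq_periodicSeg {r j : ℕ} (t : ℕ) (hj : j ≤ r) :
    srPrime r t j = periodicSeg (r + 1) 0 ((r + 1) * t + j) := by
  simp only [srPrime, periodicSeg_zero, List.range_add, List.map_append, List.map_map]
  congr 1
  refine List.map_congr_left fun i hi => ?_
  have : i < r + 1 := by simp at hi; omega
  simp [Nat.mod_eq_of_lt this]

theorem sparse_periodicSeg (r n : ℕ) : Sparse r (periodicSeg r 0 n) := by
  rw [periodicSeg_zero, sparse_range_map_iff]
  intro i k hik _ hki h
  have := add_le_of_lt_of_mod_eq hik (by simpa using h)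
  omega

-- `φ` lists the positions of a copy of `u` in the word `a₁ ⋯ a_r a₁ ⋯ a_r ⋯`, where position `p`
-- carries the letter `a_{p % r + 1}`.
structure IsPeriodicEmbedding (u : List α) (r : ℕ) (φ : Fin u.length → ℕ) : Prop where
  strictMono : StrictMono φ
  mod_eq_iff : ∀ i k, φ i % r = φ k % r ↔ u.get i = u.get k

theorem containsCopy_periodicSeg_iff {u : List α} {r n : ℕ} :
    ContainsCopy (periodicSeg r 0 n) u ↔
      ∃ φ, IsPeriodicEmbedding u r φ ∧ ∀ i, φ i < n := by
  simp only [periodicSeg_zero, containsCopy_range_map_iff, Nat.add_right_cancel_iff]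
  exact ⟨fun ⟨φ, h₁, h₂, h₃⟩ => ⟨φ, ⟨h₁, h₃⟩, h₂⟩, fun ⟨φ, ⟨h₁, h₃⟩, h₂⟩ => ⟨φ, h₁, h₂, h₃⟩⟩

namespace IsPeriodicEmbedding

variable {u : List α} {r : ℕ} {φ : Fin u.length → ℕ}

theorem head_add_le (hφ : IsPeriodicEmbedding u r φ) (hu : 2 ≤ u.length)
    (h01 : u[0]? = u[1]?) {i : Fin u.length} (hi : (i : ℕ) ≠ 0) : φ ⟨0, by omega⟩ + r ≤ φ i := by
  have h₀₁ : u.get ⟨0, by omega⟩ = u.get ⟨1, hu⟩ := Option.some.inj (by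
    rw [List.get_eq_getElem, List.get_eq_getElem, ← List.getElem?_eq_getElem,
      ← List.getElem?_eq_getElem]
    exact h01)
  have := add_le_of_lt_of_mod_eq (hφ.strictMono (Fin.mk_lt_mk.2 one_pos))
    ((hφ.mod_eq_iff _ _).2 h₀₁)
  have := hφ.strictMono.monotone (show ⟨1, hu⟩ ≤ i from Fin.le_def.2 (by simp only; omega))
  omega

theorem add_le_last (hφ : IsPeriodicEmbedding u r φ) (hu : 2 ≤ u.length)
    (hlast : u[u.length - 1]? = u[u.length - 2]?) {i : Fin u.length} (hi : (i : ℕ) ≠ u.length - 1) :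
    φ i + r ≤ φ ⟨u.length - 1, by omega⟩ := by
  have hpl : u.get ⟨u.length - 2, by omega⟩ = u.get ⟨u.length - 1, by omega⟩ := Option.some.inj (by
    rw [List.get_eq_getElem, List.get_eq_getElem, ← List.getElem?_eq_getElem,
      ← List.getElem?_eq_getElem]
    exact hlast.symm)
  have := add_le_of_lt_of_mod_eq (hφ.strictMono (Fin.mk_lt_mk.2 (by omega)))
    ((hφ.mod_eq_iff _ _).2 hpl)
  have := hφ.strictMono.monotone
    (show i ≤ ⟨u.length - 2, by omega⟩ from Fin.le_def.2 (by have := i.2; simp only; omega))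
  omega

end IsPeriodicEmbedding

theorem containsCopy_of_shifted_residues {u : List α} {r n e : ℕ} {W : ℕ → ℕ}
    {φ ψ : Fin u.length → ℕ} (hr : 0 < r) (hφ : ∀ i k, φ i % r = φ k % r ↔ u.get i = u.get k)
    (hψ : StrictMono ψ) (hlt : ∀ i, ψ i < n) (hW : ∀ i, W (ψ i) = (φ i % r + e) % (r + 1) + 1) :
    ContainsCopy ((List.range n).map W) u := by
  refine containsCopy_range_map_iff.2 ⟨ψ, hψ, hlt, fun i k => ?_⟩
  have hi := Nat.mod_lt (φ i) hr
  have hk := Nat.mod_lt (φ k) hr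
  rw [hW, hW, Nat.add_right_cancel_iff, add_mod_eq_add_mod_iff (by omega) (by omega), hφ]

end Periodic

section Collapse

-- The position of `p` in a word of period `r + 1` once all letters of residue `y` are deleted.
def collapse (r y p : ℕ) : ℕ :=
  r * (p / (r + 1)) + if p % (r + 1) < y then p % (r + 1) else p % (r + 1) - 1

variable {r y p q : ℕ}

theorem collapse_mod (hy : y ≤ r) (hp : p % (r + 1) ≠ y) :
    collapse r y p % r = if p % (r + 1) < y then p % (r + 1) else p % (r + 1) - 1 := by
  have := Nat.mod_lt p (by omega : 0 < r + 1)
  rw [collapse, Nat.mul_add_mod, Nat.mod_eq_of_lt]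
  split_ifs <;> omega

theorem collapse_mod_eq_collapse_mod_iff (hy : y ≤ r) (hp : p % (r + 1) ≠ y)
    (hq : q % (r + 1) ≠ y) :
    collapse r y p % r = collapse r y q % r ↔ p % (r + 1) = q % (r + 1) := by
  rw [collapse_mod hy hp, collapse_mod hy hq]
  split_ifs <;> omega

theorem collapse_lt_collapse (hy : y ≤ r) (hpq : p < q) (hp : p % (r + 1) ≠ y)
    (hq : q % (r + 1) ≠ y) : collapse r y p < collapse r y q := by
  have hdiv := Nat.div_le_div_right (c := r + 1) hpq.le
  have hp' := Nat.div_add_mod p (r + 1)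
  have hq' := Nat.div_add_mod q (r + 1)
  have := Nat.mod_lt p (by omega : 0 < r + 1)
  have := Nat.mod_lt q (by omega : 0 < r + 1)
  have hp'' := add_one_mul r (p / (r + 1))
  have hq'' := add_one_mul r (q / (r + 1))
  simp only [collapse]
  rcases hdiv.lt_or_eq with hlt | heq
  · have := Nat.mul_le_mul_left r hlt
    rw [Nat.mul_succ] at this
    split_ifs <;> omega
  · rw [heq] at hp' hp'' ⊢
    split_ifs <;> omega

theorem collapse_lt {t j : ℕ} (hy : y ≤ r) (hj : j ≤ r) (hpt : p < (r + 1) * t + j)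
    (hp : p % (r + 1) ≠ y) : collapse r y p < r * t + j := by
  have hdiv : p / (r + 1) ≤ t := Nat.lt_succ_iff.1 ((Nat.div_lt_iff_lt_mul (by omega)).2
    (by rw [Nat.succ_mul, mul_comm]; omega))
  have h := Nat.div_add_mod p (r + 1)
  have := Nat.mod_lt p (by omega : 0 < r + 1)
  have h' := add_one_mul r (p / (r + 1))
  have := add_one_mul r t
  simp only [collapse]
  rcases hdiv.lt_or_eq with hlt | heq
  · have := Nat.mul_le_mul_left r hlt
    rw [Nat.mul_succ] at this
    split_ifs <;> omega
  · rw [heq] at h h' ⊢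
    split_ifs <;> omega

end Collapse

theorem containsCopy_periodicSeg_of_filter {u : List α} {r t j y : ℕ} (hy : y ≤ r) (hj : j ≤ r)
    (h : ContainsCopy (((List.range ((r + 1) * t + j)).filter (· % (r + 1) ≠ y)).map
      (· % (r + 1) + 1)) u) :
    ContainsCopy (periodicSeg r 0 (r * t + j)) u := by
  obtain ⟨φ, hφ, hmem, hpat⟩ := (containsCopy_map_iff (List.pairwise_lt_range.filter _)).1 h
  simp only [List.mem_filter, List.mem_range, decide_eq_true_eq] at hmem
  refine containsCopy_periodicSeg_iff.2 ⟨fun i => collapse r y (φ i),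
    ⟨fun i k hik => collapse_lt_collapse hy (hφ hik) (hmem i).2 (hmem k).2, fun i k => ?_⟩,
    fun i => collapse_lt hy hj (hmem i).1 (hmem i).2⟩
  rw [collapse_mod_eq_collapse_mod_iff hy (hmem i).2 (hmem k).2, ← hpat, Nat.add_right_cancel_iff]

theorem not_containsCopy_srPrime [DecidableEq α] {u : List α} {r t j : ℕ}
    (hcard : u.toFinset.card = r) (hj : j ≤ r)
    (havoid : ¬ ContainsCopy (periodicSeg r 0 (r * t + j)) u) :
    ¬ ContainsCopy (srPrime r t j) u := by
  rw [srPrime_eq_periodicSeg t hj, periodicSeg_zero]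
  rintro ⟨_, hv, f, hf, rfl⟩
  obtain ⟨z, hz, hzv⟩ : ∃ z ∈ Finset.Icc 1 (r + 1), z ∉ (u.map f).toFinset := by
    refine Finset.exists_mem_notMem_of_card_lt_card ?_
    have himage : (u.map f).toFinset = u.toFinset.image f := by ext; simp
    have := Finset.card_image_le (s := u.toFinset) (f := f)
    rw [himage, Nat.card_Icc]
    omega
  rw [Finset.mem_Icc] at hz
  refine havoid (containsCopy_periodicSeg_of_filter (y := z - 1) (by omega) hj
    ⟨u.map f, ?_, f, hf, rfl⟩)
  have hfilter : ((List.range ((r + 1) * t + j)).filter (· % (r + 1) ≠ z - 1)).map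
      (· % (r + 1) + 1) =
      ((List.range ((r + 1) * t + j)).map (· % (r + 1) + 1)).filter (· ≠ z) := by
    rw [List.filter_map]
    congr 1
    refine List.filter_congr fun p _ => ?_
    simp only [Function.comp_apply, ne_eq, decide_eq_decide]
    omega
  have hvz : (u.map f).filter (· ≠ z) = u.map f :=
    List.filter_eq_self.2 fun a ha => by
      simp only [ne_eq, decide_eq_true_eq]
      rintro rfl
      exact hzv (List.mem_toFinset.2 ha)
  rw [hfilter, ← hvz]
  exact hv.filter _

section Insertion

variable {r t j m x : ℕ}

theorem stretch_sub_add_lt {p e : ℕ} (hj : j < r) (hp : p < r * (t + 1) + j + 1)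
    (he : e < r + 1) : stretch r (p - r) + e < (r + 1) * (t + 1) + j := by
  have := stretch_lt (a := t) (b := j + 1) (show p - r < r * t + (j + 1) by
    rw [mul_add_one] at hp; omega) hj
  rw [mul_add_one]
  omega

theorem stretch_add_lt_of_add_le {p a e : ℕ} (hj : j < r) (ha : a < r * (t + 1) + j + 1)
    (hpa : p + r ≤ a) (he : e < r + 1) (hae : (a % r + e) % (r + 1) = x - 1)
    (hm : m = (r + 1) * (t + 1) + j ∨ m = (r + 1) * (t + 1) + j - 1 ∧ x = j + 1) :
    stretch r p + e < m := by
  have := mul_add_one r t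
  have := mul_add_one (r + 1) t
  by_cases hjump : m = (r + 1) * (t + 1) + j - 1 ∧ e = r
  · obtain ⟨hm', her⟩ := hjump
    have hxj : x = j + 1 := by rcases hm with h | ⟨_, h⟩ <;> omega
    have ha' := Nat.mod_lt a (show 0 < r by omega)
    rw [her] at hae
    -- Only `e = r` is tight: it forces `a % r = j + 1`, so `a` stops short of the last
    -- position `r * (t + 1) + j`, whose residue is `j`.
    have haj : a % r = j + 1 := by
      rcases Nat.eq_zero_or_pos (a % r) with h0 | h0
      · rw [h0, zero_add, Nat.mod_eq_of_lt (by omega)] at hae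
        omega
      · rw [Nat.mod_eq_sub_mod (by omega), Nat.mod_eq_of_lt (by omega)] at hae
        omega
    have hne : a ≠ r * (t + 1) + j := fun h => by
      rw [h, Nat.mul_add_mod, Nat.mod_eq_of_lt hj] at haj
      omega
    have := stretch_lt (a := t) (b := j) (show p < r * t + j by omega) hj.le
    omega
  · have := stretch_lt (a := t) (b := j + 1) (show p < r * t + (j + 1) by omega) hj
    omega

theorem exists_le_add_mod_eq {ρ : ℕ} (hρ : ρ < r) (hxr : x ≤ r + 1)
    (hm : m = 0 ∨ m = 1 ∧ x = r + 1) : ∃ e, m ≤ e ∧ e < r + 1 ∧ (ρ + e) % (r + 1) = x - 1 := by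
  obtain ⟨e, he, hex⟩ := exists_add_mod_eq ρ (show x - 1 < r + 1 by omega)
  refine ⟨e, ?_, he, hex⟩
  rcases hm with rfl | ⟨rfl, rfl⟩
  · omega
  · rcases Nat.eq_zero_or_pos e with rfl | he
    · rw [add_zero, Nat.mod_eq_of_lt (by omega)] at hex
      omega
    · omega

theorem containsCopy_srPrime_insertIdx_front {u : List α} (ht : 1 ≤ t) (hj : j < r)
    (hu : 2 ≤ u.length) (h01 : u[0]? = u[1]?)
    (hmax : ContainsCopy (periodicSeg r 0 (r * t + j + 1)) u) (hx : 1 ≤ x) (hxr : x ≤ r + 1)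
    (hm : m = 0 ∨ m = 1 ∧ x = r + 1) :
    ContainsCopy ((srPrime r t j).insertIdx m x) u := by
  obtain ⟨t, rfl⟩ : ∃ t', t = t' + 1 := ⟨t - 1, by omega⟩
  have hr : 0 < r := by omega
  obtain ⟨φ, hφ, hφlt⟩ := containsCopy_periodicSeg_iff.1 hmax
  let i₀ : Fin u.length := ⟨0, by omega⟩
  have hgap : ∀ i, i ≠ i₀ → φ i₀ + r ≤ φ i :=
    fun i hi => hφ.head_add_le hu h01 fun h => hi (Fin.ext h)
  obtain ⟨e, hme, he, hex⟩ := exists_le_add_mod_eq (Nat.mod_lt (φ i₀) hr) hxr hm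
  have hL : m ≤ (r + 1) * (t + 1) + j := by rw [mul_add_one]; omega
  rw [srPrime_eq_periodicSeg _ hj.le, periodicSeg_zero, range_map_insertIdx hL]
  -- `i₀` goes to the inserted letter; the other positions, moved back by one period, are
  -- stretched into `s'` right after it.
  let ψ : Fin u.length → ℕ := fun i => if i = i₀ then m else stretch r (φ i - r) + e + 1
  have hψ : ∀ i, i ≠ i₀ → ψ i = stretch r (φ i - r) + e + 1 := fun i hi => if_neg hi
  refine containsCopy_of_shifted_residues hr hφ.mod_eq_iff (ψ := ψ) (e := e) (fun i k hik => ?_)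
    (fun i => ?_) (fun i => ?_)
  · have hk : k ≠ i₀ := fun h => by simp [h, i₀, Fin.lt_def] at hik
    rw [hψ k hk]
    by_cases hi : i = i₀
    · simp only [ψ, if_pos hi]
      omega
    · have := hφ.strictMono hik
      have := hgap i hi
      have := stretch_strictMono r (show φ i - r < φ k - r by omega)
      rw [hψ i hi]
      omega
  · by_cases hi : i = i₀
    · simp only [ψ, if_pos hi]
      omega
    · have := stretch_sub_add_lt hj (hφlt i) he
      rw [hψ i hi]
      omega
  · by_cases hi : i = i₀
    · simp only [ψ, insertAt, lt_irrefl, if_false, if_true, hi, hex]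
      omega
    · have := hgap i hi
      rw [hψ i hi, insertAt, if_neg (by omega), if_neg (by omega), Nat.add_sub_cancel,
        stretch_add_mod, ← Nat.mod_eq_sub_mod (by omega)]

theorem containsCopy_srPrime_insertIdx_back {u : List α} (ht : 1 ≤ t) (hj : j < r)
    (hu : 2 ≤ u.length) (hlast : u[u.length - 1]? = u[u.length - 2]?)
    (hmax : ContainsCopy (periodicSeg r 0 (r * t + j + 1)) u) (hx : 1 ≤ x) (hxr : x ≤ r + 1)
    (hm : m = (r + 1) * t + j ∨ m = (r + 1) * t + j - 1 ∧ x = j + 1) :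
    ContainsCopy ((srPrime r t j).insertIdx m x) u := by
  obtain ⟨t, rfl⟩ : ∃ t', t = t' + 1 := ⟨t - 1, by omega⟩
  have hr : 0 < r := by omega
  obtain ⟨φ, hφ, hφlt⟩ := containsCopy_periodicSeg_iff.1 hmax
  let iₗ : Fin u.length := ⟨u.length - 1, by omega⟩
  obtain ⟨e, he, hex⟩ := exists_add_mod_eq (φ iₗ % r) (show x - 1 < r + 1 by omega)
  have hbefore : ∀ i, i ≠ iₗ → stretch r (φ i) + e < m := fun i hi =>
    stretch_add_lt_of_add_le hj (hφlt iₗ) (hφ.add_le_last hu hlast fun h => hi (Fin.ext h)) he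
      hex hm
  have hL : m ≤ (r + 1) * (t + 1) + j := by omega
  rw [srPrime_eq_periodicSeg _ hj.le, periodicSeg_zero, range_map_insertIdx hL]
  let ψ : Fin u.length → ℕ := fun i => if i = iₗ then m else stretch r (φ i) + e
  have hψ : ∀ i, i ≠ iₗ → ψ i = stretch r (φ i) + e := fun i hi => if_neg hi
  refine containsCopy_of_shifted_residues hr hφ.mod_eq_iff (ψ := ψ) (e := e) (fun i k hik => ?_)
    (fun i => ?_) (fun i => ?_)
  · have hi : i ≠ iₗ := fun h => by
      have := k.2
      simp only [h, iₗ, Fin.lt_def] at hik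
      omega
    rw [hψ i hi]
    by_cases hk : k = iₗ
    · simp only [ψ, if_pos hk]
      exact hbefore i hi
    · rw [hψ k hk]
      exact Nat.add_lt_add_right (stretch_strictMono r (hφ.strictMono hik)) e
  · by_cases hi : i = iₗ
    · simp only [ψ, if_pos hi]
      omega
    · have := hbefore i hi
      rw [hψ i hi]
      omega
  · by_cases hi : i = iₗ
    · simp only [ψ, insertAt, lt_irrefl, if_false, if_true, hi, hex]
      omega
    · rw [hψ i hi, insertAt, if_pos (hbefore i hi), stretch_add_mod]

theorem not_sparse_srPrime_insertIdx (hr : 3 ≤ r) (ht : 1 ≤ t) (hj : j < r) (hx : 1 ≤ x)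
    (hxr : x ≤ r + 1) (hm₀ : m ≠ 0) (hmL : m < (r + 1) * t + j) (hm₁ : m = 1 → x ≠ r + 1)
    (hmL₁ : m = (r + 1) * t + j - 1 → x ≠ j + 1) :
    ¬ Sparse r ((srPrime r t j).insertIdx m x) := by
  obtain ⟨t, rfl⟩ : ∃ t', t = t' + 1 := ⟨t - 1, by omega⟩
  have hrt := mul_add_one (r + 1) t
  obtain ⟨p, hcp, hpc, hpx⟩ := exists_mod_eq_of_lt (min (m - 2) ((r + 1) * t + j))
    (show x - 1 < r + 1 by omega)
  have hp₀ : p < r + 1 → p = x - 1 := fun h => by rwa [Nat.mod_eq_of_lt h] at hpx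
  have hpL : p = (r + 1) * t + j → x = j + 1 := fun h => by
    rw [h, Nat.mul_add_mod, Nat.mod_eq_of_lt (by omega)] at hpx
    omega
  rw [srPrime_eq_periodicSeg _ hj.le, periodicSeg_zero, range_map_insertIdx hmL.le]
  exact not_sparse_range_map_insertAt hmL.le (p := p) (by omega) (by omega) (by omega) (by omega)

theorem srPrime_insertIdx_not_sparse_or_containsCopy {u : List α} (hr : 3 ≤ r) (ht : 1 ≤ t)
    (hj : j < r) (hu : 2 ≤ u.length) (h01 : u[0]? = u[1]?)
    (hlast : u[u.length - 1]? = u[u.length - 2]?)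
    (hmax : ContainsCopy (periodicSeg r 0 (r * t + j + 1)) u) (hx : 1 ≤ x) (hxr : x ≤ r + 1)
    (hm : m ≤ (r + 1) * t + j) :
    ¬ Sparse r ((srPrime r t j).insertIdx m x) ∨
      ContainsCopy ((srPrime r t j).insertIdx m x) u := by
  by_cases hfront : m = 0 ∨ m = 1 ∧ x = r + 1
  · exact Or.inr (containsCopy_srPrime_insertIdx_front ht hj hu h01 hmax hx hxr hfront)
  by_cases hback : m = (r + 1) * t + j ∨ m = (r + 1) * t + j - 1 ∧ x = j + 1
  · exact Or.inr (containsCopy_srPrime_insertIdx_back ht hj hu hlast hmax hx hxr hback)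
  exact Or.inl (not_sparse_srPrime_insertIdx hr ht hj hx hxr (by omega) (by omega) (by omega)
    (by omega))

end Insertion

end

theorem stmt6 {α : Type*} [DecidableEq α] (u : List α)
    (hr : 3 ≤ u.toFinset.card)
    (hfirst : u[0]? = u[1]?)
    (hlast : u[u.length - 1]? = u[u.length - 2]?)
    (t j : ℕ) (ht : 1 ≤ t) (hj : j < u.toFinset.card)
    -- `s_r(u)` is the periodic segment of length `r·t + j`, i.e. `(a₁⋯a_r)^t a₁⋯a_j`:
    (havoid : ¬ ContainsCopy (periodicSeg u.toFinset.card 0 (u.toFinset.card * t + j)) u)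
    (hmax : ContainsCopy (periodicSeg u.toFinset.card 0 (u.toFinset.card * t + j + 1)) u) :
    Saturated u (srPrime u.toFinset.card t j) (Set.Icc 1 (u.toFinset.card + 1)) ∧
    ∀ i : ℕ, 1 ≤ i → i ≤ u.toFinset.card + 1 →
      ContainsCopy (i :: srPrime u.toFinset.card t j) u ∧
      ContainsCopy (srPrime u.toFinset.card t j ++ [i]) u := by
  set r := u.toFinset.card
  have hu : 2 ≤ u.length := by have := List.toFinset_card_le u; omega
  have hs := srPrime_eq_periodicSeg t hj.le
  have hlen : (srPrime r t j).length = (r + 1) * t + j := by simp [hs, periodicSeg]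
  refine ⟨⟨hs ▸ (sparse_periodicSeg _ _).mono (by omega), not_containsCopy_srPrime rfl hj.le havoid,
    fun x hx => ?_, fun x hx m hm => ?_⟩, fun x hx hxr => ⟨?_, ?_⟩⟩
  · simp only [hs, periodicSeg_zero, List.mem_map] at hx
    obtain ⟨p, -, rfl⟩ := hx
    have := Nat.mod_lt p (show 0 < r + 1 by omega)
    exact ⟨by omega, by omega⟩
  · exact srPrime_insertIdx_not_sparse_or_containsCopy hr ht hj hu hfirst hlast hmax hx.1 hx.2
      (hlen ▸ hm)
  · simpa using containsCopy_srPrime_insertIdx_front ht hj hu hfirst hmax hx hxr (Or.inl rfl)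
  · simpa [← hlen] using containsCopy_srPrime_insertIdx_back ht hj hu hlast hmax hx hxr (Or.inl rfl)
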